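/- Fix d ≥ 1, α > 0 and T > 0, and let c_j = 2^{α|j|} on the 2^d-ary tree J. Let y = (y_j)_{j∈J} and z = (z_j)_{j∈J} be two families of differentiable functions from [0, T] to [0, ∞), both satisfying the linear system y_j'(t) = −(c_j² + Σ_{k∈O_j} c_k²) y_j(t) + c_j² y_ȷ̄(t) + Σ_{k∈O_j} c_k² y_k(t) for all j ∈ J (with y_{∅̄} ≡ 0), both satisfying Σ_{j∈J} y_j(t) ≤ Σ_{j∈J} y_j(0) < ∞ for all t ∈ [0, T], and with y_j(0) = z_j(0) for all j ∈ J. Then y_j(t) = z_j(t) for all j ∈ J, t ∈ [0, T]. -/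

import Mathlib

/-!
The difference `w = y - z` solves the same linear system with `w(0) = 0`, and nonnegativity
with the mass hypotheses bounds every level mass `N_n(t) = ∑_{|j| = n} |w_j(t)|` by
`C = ∑ y_j(0) + ∑ z_j(0)`. On level `n` each `w_j` is damped at rate `λ_n = c_n² + 2^d c_{n+1}²`
and fed by its parent and its children, so by Duhamel's formula, if all level masses stay
below `M` on `[0, T]`, then `N_n ≤ (2^d c_n² + c_{n+1}²) M / λ_n = κ M` with
`κ = (2^d + 4^α) / (1 + 2^d 4^α)`, and `κ < 1` because `2^d > 1` and `4^α > 1`.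
Iterating gives `N_n ≤ κ^k C → 0`.
-/

open Set

namespace Stmt11

/-- Nodes of the `2^d`-ary tree: finite words over an alphabet with `2^d` letters.
The root is the empty word, the parent of `a :: j` is `j`, and the children of `j`
are the words `a :: j` for `a : Fin (2^d)`. -/
abbrev Word (d : ℕ) := List (Fin (2 ^ d))

/-- The coefficient `c_j = 2^(α |j|)`. -/
noncomputable def coef (α : ℝ) {d : ℕ} (j : Word d) : ℝ := (2 : ℝ) ^ (α * (j.length : ℝ))

/-- The value at the parent node, with the convention that the (fictitious) parent of the
root carries the value `f`. -/
def parentVal {d : ℕ} (f : ℝ) (X : Word d → ℝ) : Word d → ℝ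
  | [] => f
  | _ :: j => X j

/-- The right-hand side of the closed second-moment linear system associated to the
stochastic KP model: `−(c_j² + Σ_{k∈O_j} c_k²) y_j + c_j² y_ȷ̄ + Σ_{k∈O_j} c_k² y_k`,
with the convention `y_{∅̄} ≡ 0`. -/
noncomputable def linRHS {d : ℕ} (α : ℝ) (y : Word d → ℝ) (j : Word d) : ℝ :=
  -((coef α j) ^ 2 + ∑ a : Fin (2 ^ d), (coef α (a :: j)) ^ 2) * y j
    + (coef α j) ^ 2 * parentVal 0 y j
    + ∑ a : Fin (2 ^ d), (coef α (a :: j)) ^ 2 * y (a :: j)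

section Tree

variable {d : ℕ}

def wordsOfLength (d : ℕ) : ℕ → Finset (Word d)
  | 0 => {[]}
  | n + 1 => (Finset.univ ×ˢ wordsOfLength d n).image fun p => p.1 :: p.2

theorem mem_wordsOfLength {n : ℕ} {j : Word d} : j ∈ wordsOfLength d n ↔ j.length = n := by
  induction n generalizing j with
  | zero => simp [wordsOfLength]
  | succ n ih => cases j <;> simp [wordsOfLength, ih]

theorem sum_wordsOfLength_succ {M : Type*} [AddCommMonoid M] (n : ℕ) (f : Word d → M) :
    ∑ j ∈ wordsOfLength d (n + 1), f j
      = ∑ a : Fin (2 ^ d), ∑ i ∈ wordsOfLength d n, f (a :: i) := by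
  rw [wordsOfLength, Finset.sum_image, Finset.sum_product]
  rintro ⟨a, i⟩ - ⟨b, k⟩ - h
  simpa using h

def levelMass (X : Word d → ℝ) (n : ℕ) : ℝ := ∑ j ∈ wordsOfLength d n, |X j|

theorem levelMass_nonneg (X : Word d → ℝ) (n : ℕ) : 0 ≤ levelMass X n :=
  Finset.sum_nonneg fun _ _ => abs_nonneg _

theorem abs_le_levelMass (X : Word d → ℝ) (j : Word d) : |X j| ≤ levelMass X j.length :=
  Finset.single_le_sum (f := fun i => |X i|) (fun _ _ => abs_nonneg _) (mem_wordsOfLength.2 rfl)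

theorem levelMass_sub_le_tsum_add_tsum {X Y : Word d → ℝ} (hX : ∀ j, 0 ≤ X j) (hY : ∀ j, 0 ≤ Y j)
    (hXs : Summable X) (hYs : Summable Y) (n : ℕ) :
    levelMass (fun j => X j - Y j) n ≤ ∑' j, X j + ∑' j, Y j :=
  calc levelMass (fun j => X j - Y j) n
      ≤ ∑ j ∈ wordsOfLength d n, X j + ∑ j ∈ wordsOfLength d n, Y j := by
        rw [← Finset.sum_add_distrib]
        refine Finset.sum_le_sum fun j _ => (abs_sub _ _).trans_eq ?_
        rw [abs_of_nonneg (hX j), abs_of_nonneg (hY j)]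
    _ ≤ ∑' j, X j + ∑' j, Y j :=
      add_le_add (hXs.sum_le_tsum _ fun j _ => hX j) (hYs.sum_le_tsum _ fun j _ => hY j)

theorem sum_abs_parentVal_le {X : Word d → ℝ} {M : ℝ} (hM : ∀ m, levelMass X m ≤ M) (n : ℕ) :
    ∑ j ∈ wordsOfLength d n, |parentVal 0 X j| ≤ 2 ^ d * M := by
  cases n with
  | zero =>
    simpa [wordsOfLength, parentVal] using (levelMass_nonneg X 0).trans (hM 0)
  | succ n =>
    rw [sum_wordsOfLength_succ]
    simpa [parentVal, levelMass] using
      mul_le_mul_of_nonneg_left (hM n) (by positivity : (0 : ℝ) ≤ 2 ^ d)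

end Tree

noncomputable section Coefficients

variable {d : ℕ}

def levelWeight (α : ℝ) (n : ℕ) : ℝ := ((2 : ℝ) ^ (α * n)) ^ 2

theorem coef_sq (α : ℝ) (j : Word d) : coef α j ^ 2 = levelWeight α j.length := rfl

theorem levelWeight_pos (α : ℝ) (n : ℕ) : 0 < levelWeight α n := by
  unfold levelWeight; positivity

theorem levelWeight_succ (α : ℝ) (n : ℕ) :
    levelWeight α (n + 1) = levelWeight α n * ((2 : ℝ) ^ α) ^ 2 := by
  rw [levelWeight, levelWeight, ← mul_pow, ← Real.rpow_add two_pos]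
  push_cast
  ring_nf

def outRate (d : ℕ) (α : ℝ) (n : ℕ) : ℝ := levelWeight α n + 2 ^ d * levelWeight α (n + 1)

def inflow (α : ℝ) (X : Word d → ℝ) (j : Word d) : ℝ :=
  coef α j ^ 2 * parentVal 0 X j + ∑ a : Fin (2 ^ d), coef α (a :: j) ^ 2 * X (a :: j)

theorem outRate_pos (d : ℕ) (α : ℝ) (n : ℕ) : 0 < outRate d α n := by
  have := levelWeight_pos α n
  have := levelWeight_pos α (n + 1)
  unfold outRate; positivity

theorem linRHS_eq (α : ℝ) (X : Word d → ℝ) (j : Word d) :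
    linRHS α X j = -outRate d α j.length * X j + inflow α X j := by
  simp only [linRHS, inflow, outRate, coef_sq, List.length_cons, Finset.sum_const,
    Finset.card_univ, Fintype.card_fin, nsmul_eq_mul]
  push_cast
  ring

theorem linRHS_sub (α : ℝ) (X Y : Word d → ℝ) (j : Word d) :
    linRHS α (fun i => X i - Y i) j = linRHS α X j - linRHS α Y j := by
  have hparent : parentVal 0 (fun i => X i - Y i) j = parentVal 0 X j - parentVal 0 Y j := by
    cases j <;> simp [parentVal]
  simp only [linRHS, hparent, mul_sub, Finset.sum_sub_distrib]
  ring

theorem levelMass_inflow_le {α M : ℝ} {X : Word d → ℝ} (hM : ∀ m, levelMass X m ≤ M) (n : ℕ) :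
    levelMass (inflow α X) n ≤ (2 ^ d * levelWeight α n + levelWeight α (n + 1)) * M := by
  have hpointwise : ∀ j ∈ wordsOfLength d n, |inflow α X j| ≤ levelWeight α n * |parentVal 0 X j|
      + ∑ a : Fin (2 ^ d), levelWeight α (n + 1) * |X (a :: j)| := by
    intro j hj
    rw [mem_wordsOfLength] at hj
    refine (abs_add_le _ _).trans (add_le_add ?_ ((Finset.abs_sum_le_sum_abs _ _).trans ?_))
    · rw [abs_mul, coef_sq, hj, abs_of_pos (levelWeight_pos α n)]
    · refine Finset.sum_le_sum fun a _ => ?_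
      rw [abs_mul, coef_sq, List.length_cons, hj, abs_of_pos (levelWeight_pos α (n + 1))]
  calc levelMass (inflow α X) n
      ≤ levelWeight α n * ∑ j ∈ wordsOfLength d n, |parentVal 0 X j|
        + levelWeight α (n + 1) * levelMass X (n + 1) := by
        refine (Finset.sum_le_sum hpointwise).trans_eq ?_
        rw [Finset.sum_add_distrib, Finset.mul_sum, Finset.sum_comm, levelMass,
          sum_wordsOfLength_succ, Finset.mul_sum]
        simp only [Finset.mul_sum]
    _ ≤ levelWeight α n * (2 ^ d * M) + levelWeight α (n + 1) * M := by
        gcongr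
        · exact (levelWeight_pos α n).le
        · exact sum_abs_parentVal_le hM n
        · exact (levelWeight_pos α (n + 1)).le
        · exact hM (n + 1)
    _ = (2 ^ d * levelWeight α n + levelWeight α (n + 1)) * M := by ring

def contractionRatio (d : ℕ) (α : ℝ) : ℝ :=
  (2 ^ d + ((2 : ℝ) ^ α) ^ 2) / (1 + 2 ^ d * ((2 : ℝ) ^ α) ^ 2)

theorem two_pow_mul_levelWeight_add_levelWeight_succ (d : ℕ) (α : ℝ) (n : ℕ) :
    2 ^ d * levelWeight α n + levelWeight α (n + 1) = contractionRatio d α * outRate d α n := by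
  have := levelWeight_pos α n
  rw [contractionRatio, outRate, levelWeight_succ]
  field_simp

theorem contractionRatio_nonneg (d : ℕ) (α : ℝ) : 0 ≤ contractionRatio d α := by
  unfold contractionRatio; positivity

theorem contractionRatio_lt_one {d : ℕ} {α : ℝ} (hd : 1 ≤ d) (hα : 0 < α) :
    contractionRatio d α < 1 := by
  have hD : (1 : ℝ) < 2 ^ d := one_lt_pow₀ one_lt_two (by omega)
  have hR : (1 : ℝ) < ((2 : ℝ) ^ α) ^ 2 :=
    one_lt_pow₀ (Real.one_lt_rpow one_lt_two hα) two_ne_zero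
  rw [contractionRatio, div_lt_one (by positivity)]
  nlinarith

end Coefficients

section Duhamel

open Real intervalIntegral

theorem eq_exp_neg_mul_integral_of_hasDerivWithinAt {f g : ℝ → ℝ} {r t : ℝ} (ht : 0 ≤ t)
    (hf : ∀ s ∈ Icc 0 t, HasDerivWithinAt f (-r * f s + g s) (Icc 0 t) s)
    (hg : ContinuousOn g (Icc 0 t)) (hf0 : f 0 = 0) :
    f t = exp (-(r * t)) * ∫ s in (0)..t, exp (r * s) * g s := by
  have hexp : Continuous fun s => exp (r * s) := by fun_prop
  have hcont : ContinuousOn (fun s => exp (r * s) * f s) (Icc 0 t) :=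
    hexp.continuousOn.mul fun s hs => (hf s hs).continuousWithinAt
  have hderiv : ∀ s ∈ Ioo 0 t,
      HasDerivWithinAt (fun s => exp (r * s) * f s) (exp (r * s) * g s) (Ioi s) s := by
    intro s hs
    have hfs := (hf s (Ioo_subset_Icc_self hs)).hasDerivAt (Icc_mem_nhds hs.1 hs.2)
    have hes : HasDerivAt (fun s => exp (r * s)) (exp (r * s) * r) s := by
      simpa using ((hasDerivAt_id s).const_mul r).exp
    exact ((hes.mul hfs).congr_deriv (by ring)).hasDerivWithinAt
  have hint : IntervalIntegrable (fun s => exp (r * s) * g s) MeasureTheory.volume 0 t :=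
    (hexp.continuousOn.mul hg).intervalIntegrable_of_Icc ht
  rw [integral_eq_sub_of_hasDeriv_right_of_le ht hcont hderiv hint, hf0, mul_zero, sub_zero,
    ← mul_assoc, ← exp_add, neg_add_cancel, exp_zero, one_mul]

theorem exp_neg_mul_integral_exp_mul_le {r : ℝ} (hr : 0 < r) (t : ℝ) :
    exp (-(r * t)) * ∫ s in (0)..t, exp (r * s) ≤ r⁻¹ := by
  rw [integral_comp_mul_left (fun s => exp s) hr.ne', integral_exp, mul_zero, exp_zero,
    smul_eq_mul]
  have h : exp (-(r * t)) * exp (r * t) = 1 := by rw [← exp_add, neg_add_cancel, exp_zero]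
  have hpos := exp_pos (-(r * t))
  calc exp (-(r * t)) * (r⁻¹ * (exp (r * t) - 1)) = r⁻¹ * (1 - exp (-(r * t))) := by
        linear_combination r⁻¹ * h
    _ ≤ r⁻¹ := mul_le_of_le_one_right (inv_pos.2 hr).le (by linarith)

theorem sum_abs_le_of_hasDerivWithinAt {ι : Type*} (S : Finset ι) {f g : ι → ℝ → ℝ}
    {r t K : ℝ} (hr : 0 < r) (ht : 0 ≤ t)
    (hf : ∀ i ∈ S, ∀ s ∈ Icc 0 t, HasDerivWithinAt (f i) (-r * f i s + g i s) (Icc 0 t) s)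
    (hg : ∀ i ∈ S, ContinuousOn (g i) (Icc 0 t)) (hf0 : ∀ i ∈ S, f i 0 = 0)
    (hK : ∀ s ∈ Icc 0 t, ∑ i ∈ S, |g i s| ≤ K) :
    ∑ i ∈ S, |f i t| ≤ K / r := by
  have hexp : Continuous fun s => exp (r * s) := by fun_prop
  have hint : ∀ i ∈ S,
      IntervalIntegrable (fun s => exp (r * s) * |g i s|) MeasureTheory.volume 0 t :=
    fun i hi => (hexp.continuousOn.mul (hg i hi).abs).intervalIntegrable_of_Icc ht
  have hK0 : 0 ≤ K :=
    (Finset.sum_nonneg fun _ _ => abs_nonneg _).trans (hK 0 ⟨le_rfl, ht⟩)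
  calc ∑ i ∈ S, |f i t|
      ≤ ∑ i ∈ S, exp (-(r * t)) * ∫ s in (0)..t, exp (r * s) * |g i s| := by
        refine Finset.sum_le_sum fun i hi => ?_
        rw [eq_exp_neg_mul_integral_of_hasDerivWithinAt ht (hf i hi) (hg i hi) (hf0 i hi),
          abs_mul, abs_of_pos (exp_pos _)]
        gcongr
        refine (abs_integral_le_integral_abs ht).trans_eq ?_
        simp only [abs_mul, abs_of_pos (exp_pos _)]
    _ = exp (-(r * t)) * ∫ s in (0)..t, exp (r * s) * ∑ i ∈ S, |g i s| := by
        simp only [Finset.mul_sum, integral_finsetSum hint]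
    _ ≤ exp (-(r * t)) * ∫ s in (0)..t, exp (r * s) * K := by
        gcongr
        refine integral_mono_on ht ?_ ?_ fun s hs => ?_
        · exact (hexp.continuousOn.mul
            (continuousOn_finsetSum _ fun i hi => (hg i hi).abs)).intervalIntegrable_of_Icc ht
        · exact (hexp.mul continuous_const).intervalIntegrable _ _
        · exact mul_le_mul_of_nonneg_left (hK s hs) (exp_pos _).le
    _ = K * (exp (-(r * t)) * ∫ s in (0)..t, exp (r * s)) := by
        rw [integral_mul_const]; ring
    _ ≤ K / r := by
        rw [div_eq_mul_inv]
        exact mul_le_mul_of_nonneg_left (exp_neg_mul_integral_exp_mul_le hr t) hK0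

end Duhamel

theorem le_zero_of_forall_le_mul_of_lt_one {ι : Type*} {f : ι → ℝ} {κ C : ℝ} (hκ0 : 0 ≤ κ)
    (hκ1 : κ < 1) (hC : ∀ i, f i ≤ C) (hcontract : ∀ M, (∀ i, f i ≤ M) → ∀ i, f i ≤ κ * M)
    (i : ι) : f i ≤ 0 := by
  have hpow : ∀ k : ℕ, ∀ i, f i ≤ κ ^ k * C := by
    intro k
    induction k with
    | zero => simpa using hC
    | succ k ih => simpa [pow_succ, mul_comm, mul_left_comm] using hcontract _ ih
  have hlim : Filter.Tendsto (fun k : ℕ => κ ^ k * C) Filter.atTop (nhds 0) := by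
    simpa using (tendsto_pow_atTop_nhds_zero_of_lt_one hκ0 hκ1).mul_const C
  exact ge_of_tendsto' hlim fun k => hpow k i

section Solutions

variable {d : ℕ} {α T : ℝ}

def IsSolutionOn (α T : ℝ) (y : Word d → ℝ → ℝ) : Prop :=
  ∀ j : Word d, ∀ t ∈ Icc (0 : ℝ) T,
    HasDerivWithinAt (y j) (linRHS α (fun i => y i t) j) (Icc 0 T) t

theorem IsSolutionOn.sub {y z : Word d → ℝ → ℝ} (hy : IsSolutionOn α T y)
    (hz : IsSolutionOn α T z) : IsSolutionOn α T fun j t => y j t - z j t := by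
  intro j t ht
  rw [linRHS_sub]
  exact (hy j t ht).sub (hz j t ht)

theorem IsSolutionOn.continuousOn_inflow {w : Word d → ℝ → ℝ} (hw : IsSolutionOn α T w)
    (j : Word d) : ContinuousOn (fun t => inflow α (fun i => w i t) j) (Icc 0 T) := by
  have hcont : ∀ i, ContinuousOn (w i) (Icc 0 T) := fun i t ht => (hw i t ht).continuousWithinAt
  refine (continuousOn_const.mul ?_).add
    (continuousOn_finsetSum _ fun a _ => continuousOn_const.mul (hcont _))
  cases j with
  | nil => exact continuousOn_const
  | cons a i => exact hcont i

theorem IsSolutionOn.levelMass_le_contractionRatio_mul {w : Word d → ℝ → ℝ} {M : ℝ}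
    (hw : IsSolutionOn α T w) (hw0 : ∀ j, w j 0 = 0)
    (hM : ∀ m, ∀ s ∈ Icc 0 T, levelMass (fun j => w j s) m ≤ M) (n : ℕ) {t : ℝ}
    (ht : t ∈ Icc 0 T) : levelMass (fun j => w j t) n ≤ contractionRatio d α * M := by
  have hsub : Icc 0 t ⊆ Icc 0 T := Icc_subset_Icc_right ht.2
  have hr := outRate_pos d α n
  have hinflow : ∀ s ∈ Icc 0 t, levelMass (inflow α fun i => w i s) n
      ≤ contractionRatio d α * outRate d α n * M := fun s hs => by
    rw [← two_pow_mul_levelWeight_add_levelWeight_succ]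
    exact levelMass_inflow_le (fun m => hM m s (hsub hs)) n
  have hderiv : ∀ j ∈ wordsOfLength d n, ∀ s ∈ Icc 0 t, HasDerivWithinAt (w j)
      (-outRate d α n * w j s + inflow α (fun i => w i s) j) (Icc 0 t) s := by
    intro j hj s hs
    simpa only [linRHS_eq, mem_wordsOfLength.1 hj] using (hw j s (hsub hs)).mono hsub
  calc levelMass (fun j => w j t) n
      ≤ contractionRatio d α * outRate d α n * M / outRate d α n :=
        sum_abs_le_of_hasDerivWithinAt _ hr ht.1 hderiv
          (fun j _ => (hw.continuousOn_inflow j).mono hsub) (fun j _ => hw0 j) hinflow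
    _ = contractionRatio d α * M := by field_simp

end Solutions

theorem second_moment_uniqueness_general (d : ℕ) (hd : 1 ≤ d) (α T : ℝ) (hα : 0 < α)
    (y z : Word d → ℝ → ℝ)
    (hy_nonneg : ∀ j : Word d, ∀ t ∈ Icc (0 : ℝ) T, 0 ≤ y j t)
    (hz_nonneg : ∀ j : Word d, ∀ t ∈ Icc (0 : ℝ) T, 0 ≤ z j t)
    (hy : ∀ j : Word d, ∀ t ∈ Icc (0 : ℝ) T,
      HasDerivWithinAt (y j) (linRHS α (fun i => y i t) j) (Icc 0 T) t)
    (hz : ∀ j : Word d, ∀ t ∈ Icc (0 : ℝ) T,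
      HasDerivWithinAt (z j) (linRHS α (fun i => z i t) j) (Icc 0 T) t)
    (hy_mass : ∀ t ∈ Icc (0 : ℝ) T,
      (Summable fun j : Word d => y j t) ∧ (∑' j : Word d, y j t) ≤ ∑' j : Word d, y j 0)
    (hz_mass : ∀ t ∈ Icc (0 : ℝ) T,
      (Summable fun j : Word d => z j t) ∧ (∑' j : Word d, z j t) ≤ ∑' j : Word d, z j 0)
    (hinit : ∀ j : Word d, y j 0 = z j 0) :
    ∀ j : Word d, ∀ t ∈ Icc (0 : ℝ) T, y j t = z j t := by
  intro j t ht
  set w : Word d → ℝ → ℝ := fun i s => y i s - z i s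
  have hw : IsSolutionOn α T w := IsSolutionOn.sub hy hz
  have hmass : ∀ n, ∀ s ∈ Icc 0 T,
      levelMass (fun i => w i s) n ≤ (∑' i, y i 0) + ∑' i, z i 0 := fun n s hs =>
    (levelMass_sub_le_tsum_add_tsum (hy_nonneg · s hs) (hz_nonneg · s hs) (hy_mass s hs).1
      (hz_mass s hs).1 n).trans (add_le_add (hy_mass s hs).2 (hz_mass s hs).2)
  have hvanish := le_zero_of_forall_le_mul_of_lt_one
    (f := fun p : ℕ × Icc 0 T => levelMass (fun i => w i p.2) p.1)
    (contractionRatio_nonneg d α) (contractionRatio_lt_one hd hα) (fun p => hmass p.1 p.2 p.2.2)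
    (fun M hM p => hw.levelMass_le_contractionRatio_mul (fun j => sub_eq_zero.2 (hinit j))
      (fun m s hs => hM (m, ⟨s, hs⟩)) p.1 p.2.2)
    (j.length, ⟨t, ht⟩)
  exact sub_eq_zero.1 (abs_nonpos_iff.1 ((abs_le_levelMass (fun i => w i t) j).trans hvanish))

/-- Two non-negative solutions of the closed second-moment linear system
on `[0, T]`, each with total mass bounded for all times by its (finite) initial total
mass, that agree at time `0`, agree on all of `[0, T]`. -/
theorem second_moment_uniqueness (d : ℕ) (hd : 1 ≤ d) (α T : ℝ) (hα : 0 < α) (hT : 0 < T)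
    (y z : Word d → ℝ → ℝ)
    (hy_nonneg : ∀ j : Word d, ∀ t ∈ Icc (0 : ℝ) T, 0 ≤ y j t)
    (hz_nonneg : ∀ j : Word d, ∀ t ∈ Icc (0 : ℝ) T, 0 ≤ z j t)
    (hy : ∀ j : Word d, ∀ t ∈ Icc (0 : ℝ) T,
      HasDerivWithinAt (y j) (linRHS α (fun i => y i t) j) (Icc 0 T) t)
    (hz : ∀ j : Word d, ∀ t ∈ Icc (0 : ℝ) T,
      HasDerivWithinAt (z j) (linRHS α (fun i => z i t) j) (Icc 0 T) t)
    (hy0_sum : Summable fun j : Word d => y j 0)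
    (hz0_sum : Summable fun j : Word d => z j 0)
    (hy_mass : ∀ t ∈ Icc (0 : ℝ) T,
      (Summable fun j : Word d => y j t) ∧ (∑' j : Word d, y j t) ≤ ∑' j : Word d, y j 0)
    (hz_mass : ∀ t ∈ Icc (0 : ℝ) T,
      (Summable fun j : Word d => z j t) ∧ (∑' j : Word d, z j t) ≤ ∑' j : Word d, z j 0)
    (hinit : ∀ j : Word d, y j 0 = z j 0) :
    ∀ j : Word d, ∀ t ∈ Icc (0 : ℝ) T, y j t = z j t :=
  second_moment_uniqueness_general d hd α T hα y z hy_nonneg hz_nonneg hy hz hy_mass hz_mass hinit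

end Stmt11
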